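/- Let α, β ∈ POPI_n(Y). Then (α, β) ∈ ℛ (Green's R-relation on POPI_n(Y)) if and only if Dom(α) = Dom(β). -/

import Mathlib

open scoped Classical

namespace POPIpaper

/-- Partial transformations of `Ω_n = {1,…,n}`, modelled on `Fin n`. -/
abbrev PT (n : ℕ) := Fin n → Option (Fin n)

/-- Composition of partial transformations (apply `α` first, then `β`). -/
def comp {n : ℕ} (α β : PT n) : PT n := fun x => (α x).bind β

/-- Domain of a partial transformation. -/
noncomputable def dom {n : ℕ} (α : PT n) : Finset (Fin n) :=
  Finset.univ.filter (fun x => (α x).isSome)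

/-- Image of a partial transformation. -/
noncomputable def im {n : ℕ} (α : PT n) : Finset (Fin n) :=
  Finset.univ.filter (fun y => ∃ x, α x = some y)

/-- rank(α) = |Im(α)|. -/
noncomputable def rank {n : ℕ} (α : PT n) : ℕ := (im α).card

/-- Injectivity of a partial transformation. -/
def Inj {n : ℕ} (α : PT n) : Prop :=
  ∀ x y z : Fin n, α x = some z → α y = some z → x = y

/-- Orientation-preserving: the sequence of images, taken along the increasing
enumeration of the domain, is cyclic, i.e. some rotation of it is sorted. -/
def OP {n : ℕ} (α : PT n) : Prop :=
  ∃ k : ℕ, (((List.finRange n).filterMap α).rotate k).Pairwise (· ≤ ·)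

/-- The semigroup `POPI_n(Y)` as a set of partial transformations:
injective, orientation-preserving, with image contained in `Y`. -/
def POPI (n : ℕ) (Y : Finset (Fin n)) : Set (PT n) :=
  {α | Inj α ∧ OP α ∧ ∀ x y : Fin n, α x = some y → y ∈ Y}

/-- Regularity of `α` as an element of the subsemigroup `S`. -/
def IsRegularIn {n : ℕ} (S : Set (PT n)) (α : PT n) : Prop :=
  ∃ β ∈ S, comp (comp α β) α = α

/-- The partial identity on a subset `A`. -/
def idp {n : ℕ} (A : Finset (Fin n)) : PT n :=
  fun x => if x ∈ A then some x else none

/-- Fixed points of a partial transformation. -/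
noncomputable def fix {n : ℕ} (α : PT n) : Finset (Fin n) :=
  Finset.univ.filter (fun x => α x = some x)

/-- Green's relation ℒ on the set `S`: `S¹α = S¹β`. -/
def LRel {n : ℕ} (S : Set (PT n)) (α β : PT n) : Prop :=
  (α = β ∨ ∃ γ ∈ S, comp γ β = α) ∧ (β = α ∨ ∃ γ ∈ S, comp γ α = β)

/-- Green's relation ℛ on the set `S`: `αS¹ = βS¹`. -/
def RRel {n : ℕ} (S : Set (PT n)) (α β : PT n) : Prop :=
  (α = β ∨ ∃ γ ∈ S, comp β γ = α) ∧ (β = α ∨ ∃ γ ∈ S, comp α γ = β)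

/-- Green's relation ℋ = ℒ ∩ ℛ. -/
def HRel {n : ℕ} (S : Set (PT n)) (α β : PT n) : Prop :=
  LRel S α β ∧ RRel S α β

/-- Green's relation 𝒟 = ℒ ∘ ℛ. -/
def DRel {n : ℕ} (S : Set (PT n)) (α β : PT n) : Prop :=
  ∃ γ ∈ S, LRel S α γ ∧ RRel S γ β

/-- `Φ` is a semigroup isomorphism from the subsemigroup `S` onto `T`. -/
def IsIso {n : ℕ} (S T : Set (PT n)) (Φ : PT n → PT n) : Prop :=
  Set.BijOn Φ S T ∧ ∀ a ∈ S, ∀ b ∈ S, Φ (comp a b) = comp (Φ a) (Φ b)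

/-- The product `β * l₁ * ⋯ * l_k` of a nonempty list of partial transformations. -/
def prodList {n : ℕ} (β : PT n) (l : List (PT n)) : PT n := l.foldl comp β

end POPIpaper

/-! If `αS¹ = βS¹` then each of `α`, `β` is a right multiple of the other, and right
multiplication can only shrink the domain. Conversely, when `dom α = dom β` we have
`α = β (β⁻¹α)` for the partial inverse `β⁻¹`, and `β⁻¹α` lies in `POPI_n(Y)`: since `β` is
orientation-preserving, listing `im β` increasingly is a rotation of the image sequence of `β`,
so the image sequence of `β⁻¹α` is a rotation of that of `α`, which is cyclic. -/

lemma List.IsRotated.filterMap {α β : Type*} {l l' : List α} (h : l ~r l') (f : α → Option β) :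
    l.filterMap f ~r l'.filterMap f := by
  obtain ⟨k, rfl⟩ := h
  rw [List.rotate_eq_drop_append_take_mod, List.filterMap_append]
  conv_lhs => rw [← List.take_append_drop (k % l.length) l, List.filterMap_append]
  exact List.isRotated_append

lemma List.IsRotated.exists_rotate_pairwise {α : Type*} {r : α → α → Prop} {l l' : List α}
    (h : l ~r l') (hl : ∃ k, (l.rotate k).Pairwise r) : ∃ k, (l'.rotate k).Pairwise r := by
  obtain ⟨k, hk⟩ := hl
  obtain ⟨m, hm⟩ := h.symm.trans (List.IsRotated.forall l k).symm
  exact ⟨m, hm ▸ hk⟩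

lemma List.finRange_filter_mem_eq {n : ℕ} {l : List (Fin n)} (hs : l.Pairwise (· ≤ ·))
    (hl : l.Nodup) : (List.finRange n).filter (· ∈ l) = l := by
  refine List.Perm.eq_of_pairwise' ?_ hs ?_
  · exact ((List.pairwise_lt_finRange n).imp le_of_lt).filter _
  · rw [List.perm_ext_iff_of_nodup ((List.nodup_finRange n).filter _) hl]
    simp

namespace POPIpaper

variable {n : ℕ}

@[simp] lemma mem_dom {α : PT n} {x : Fin n} : x ∈ dom α ↔ (α x).isSome := by
  simp [dom]

@[simp] lemma mem_im {α : PT n} {y : Fin n} : y ∈ im α ↔ ∃ x, α x = some y := by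
  simp [im]

lemma dom_comp_subset (α γ : PT n) : dom (comp α γ) ⊆ dom α := by
  intro x hx
  cases h : α x <;> simp_all [comp]

lemma dom_subset_of_eq_or_comp {S : Set (PT n)} {α β : PT n}
    (h : α = β ∨ ∃ γ ∈ S, comp β γ = α) : dom α ⊆ dom β := by
  rcases h with rfl | ⟨γ, -, rfl⟩
  · exact subset_rfl
  · exact dom_comp_subset β γ

lemma Inj.comp {α γ : PT n} (hα : Inj α) (hγ : Inj γ) : Inj (comp α γ) := by
  intro x₁ x₂ z h₁ h₂
  obtain ⟨y₁, hy₁, hz₁⟩ := Option.bind_eq_some_iff.mp h₁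
  obtain ⟨y₂, hy₂, hz₂⟩ := Option.bind_eq_some_iff.mp h₂
  obtain rfl := hγ _ _ _ hz₁ hz₂
  exact hα _ _ _ hy₁ hy₂

noncomputable def pinv (β : PT n) : PT n :=
  fun y => if h : ∃ x, β x = some y then some h.choose else none

lemma apply_eq_some_of_pinv_eq_some {β : PT n} {x y : Fin n} (h : pinv β y = some x) :
    β x = some y := by
  unfold pinv at h
  split_ifs at h with hy
  exact Option.some_injective _ h ▸ hy.choose_spec

lemma pinv_eq_some_of_apply_eq_some {β : PT n} (hβ : Inj β) {x y : Fin n} (h : β x = some y) :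
    pinv β y = some x := by
  have hy : ∃ x, β x = some y := ⟨x, h⟩
  simp only [pinv, dif_pos hy, hβ _ _ _ hy.choose_spec h]

lemma dom_pinv (β : PT n) : dom (pinv β) = im β := by
  ext y
  simp only [mem_dom, mem_im, pinv]
  split_ifs with hy <;> simpa using hy

lemma inj_pinv (β : PT n) : Inj (pinv β) := fun _ _ _ h₁ h₂ =>
  Option.some_injective _
    ((apply_eq_some_of_pinv_eq_some h₁).symm.trans (apply_eq_some_of_pinv_eq_some h₂))

lemma comp_comp_pinv {α β : PT n} (hβ : Inj β) (hd : dom α ⊆ dom β) :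
    comp β (comp (pinv β) α) = α := by
  funext x
  cases h : β x with
  | none =>
    have hx : α x = none := by simpa [h] using mt (@hd x)
    simp [comp, h, hx]
  | some y => simp only [comp, h, Option.bind_some, pinv_eq_some_of_apply_eq_some hβ h]

lemma filterMap_finRange_isRotated {β γ : PT n} (hβ : Inj β) (hop : OP β)
    (hγ : dom γ ⊆ im β) :
    (List.finRange n).filterMap γ ~r (List.finRange n).filterMap (comp β γ) := by
  set B := (List.finRange n).filterMap β
  obtain ⟨k, hk⟩ := hop
  have hB : B.Nodup :=
    (List.nodup_finRange n).filterMap fun _ _ _ h₁ h₂ => hβ _ _ _ h₁ h₂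
  have hsort : (List.finRange n).filter (· ∈ B) = B.rotate k := by
    conv_rhs => rw [← List.finRange_filter_mem_eq hk (List.nodup_rotate.mpr hB)]
    simp only [List.mem_rotate, B]
  have hsupp :
      (List.finRange n).filterMap γ = ((List.finRange n).filter (· ∈ B)).filterMap γ := by
    rw [List.filterMap_filter]
    refine List.filterMap_congr fun y _ => ?_
    by_cases hy : y ∈ B
    · simp [hy]
    · have : y ∉ dom γ := fun h => hy (by simpa [B] using hγ h)
      simp_all
  rw [hsupp, hsort]
  convert (List.IsRotated.forall B k).filterMap γ using 1
  exact List.filterMap_filterMap.symm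

lemma op_comp_pinv {α β : PT n} (hα : OP α) (hβ : Inj β) (hβop : OP β) (hd : dom α ⊆ dom β) :
    OP (comp (pinv β) α) := by
  have hrot := filterMap_finRange_isRotated hβ hβop
    ((dom_comp_subset (pinv β) α).trans (dom_pinv β).subset)
  rw [comp_comp_pinv hβ hd] at hrot
  exact hrot.symm.exists_rotate_pairwise hα

lemma exists_right_factor {Y : Finset (Fin n)} {α β : PT n}
    (hα : α ∈ POPI n Y) (hβi : Inj β) (hβop : OP β) (hd : dom α ⊆ dom β) :
    ∃ γ ∈ POPI n Y, comp β γ = α := by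
  obtain ⟨hαi, hαop, hαY⟩ := hα
  refine ⟨comp (pinv β) α, ⟨(inj_pinv β).comp hαi, op_comp_pinv hαop hβi hβop hd, ?_⟩,
    comp_comp_pinv hβi hd⟩
  intro y z h
  obtain ⟨x, -, hx⟩ := Option.bind_eq_some_iff.mp h
  exact hαY x z hx

theorem green_R_general {n : ℕ} (Y : Finset (Fin n))
    (α β : PT n) (hα : α ∈ POPI n Y) (hβ : β ∈ POPI n Y) :
    RRel (POPI n Y) α β ↔ dom α = dom β := by
  constructor
  · rintro ⟨hαβ, hβα⟩
    exact (dom_subset_of_eq_or_comp hαβ).antisymm (dom_subset_of_eq_or_comp hβα)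
  · intro hd
    exact ⟨Or.inr (exists_right_factor hα hβ.1 hβ.2.1 hd.subset),
      Or.inr (exists_right_factor hβ hα.1 hα.2.1 hd.symm.subset)⟩

/-- Green's ℛ on `POPI_n(Y)`. -/
theorem green_R {n : ℕ} (Y : Finset (Fin n)) (hY : Y.Nonempty)
    (α β : PT n) (hα : α ∈ POPI n Y) (hβ : β ∈ POPI n Y) :
    RRel (POPI n Y) α β ↔ dom α = dom β :=
  green_R_general Y α β hα hβ

end POPIpaper
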